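/- Let π_t(i) ≥ 0 for t ∈ {1,...,T}, i ∈ {1,...,N}, let K > 0, π_*(i) ≥ 0 with Π_* = Σ_{i=1}^N π_*(i), and suppose Π_* ≤ (1/T) Σ_{t=1}^T Σ_{i=1}^N π_t(i). Define V_T(i) = Σ_{t=1}^T (π_t(i) - π_*(i))². Then (Σ_{i=1}^N √(Σ_{t=1}^T π_t(i)²))² / K - (1/K) Σ_{t=1}^T (Σ_{i=1}^N π_t(i))² ≤ (T/K) · (Σ_{i=1}^N √(V_T(i)/T)) · (2Π_* + Σ_{i=1}^N √(V_T(i)/T)). -/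

import Mathlib

theorem stmt_9 (T N : ℕ) (hT : 0 < T) (K : ℝ) (hK : 0 < K)
    (π : ℕ → Fin N → ℝ) (πstar : Fin N → ℝ)
    (hπ : ∀ t ∈ Finset.Icc 1 T, ∀ i, 0 ≤ π t i) (hπs : ∀ i, 0 ≤ πstar i)
    (havg : ∑ i, πstar i ≤ (1/(T:ℝ)) * ∑ t ∈ Finset.Icc 1 T, ∑ i, π t i) :
    (∑ i, Real.sqrt (∑ t ∈ Finset.Icc 1 T, (π t i)^2))^2 / K -
      (1/K) * ∑ t ∈ Finset.Icc 1 T, (∑ i, π t i)^2 ≤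
    ((T:ℝ)/K) * (∑ i, Real.sqrt ((∑ t ∈ Finset.Icc 1 T, (π t i - πstar i)^2) / T)) *
      (2 * (∑ i, πstar i) + ∑ i, Real.sqrt ((∑ t ∈ Finset.Icc 1 T, (π t i - πstar i)^2) / T)) := by
  set Ts := Finset.Icc 1 T with hTs
  have hcard : Ts.card = T := by simp [hTs]
  set V : Fin N → ℝ := fun i => ∑ t ∈ Ts, (π t i - πstar i)^2 with hV
  have hVnn : ∀ i, 0 ≤ V i := fun i => Finset.sum_nonneg fun t _ => sq_nonneg _
  set S' : ℝ := ∑ i, Real.sqrt (V i) with hS'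
  have hS'nn : 0 ≤ S' := Finset.sum_nonneg fun i _ => Real.sqrt_nonneg _
  set P : ℝ := ∑ i, πstar i with hP
  have hPnn : 0 ≤ P := Finset.sum_nonneg fun i _ => hπs i
  have hTpos : (0:ℝ) < T := by exact_mod_cast hT
  have hsqT : Real.sqrt T * Real.sqrt T = T := Real.mul_self_sqrt hTpos.le
  have hsTpos : 0 < Real.sqrt T := Real.sqrt_pos.2 hTpos
  -- Step 1: per-client bound
  have step1 : ∀ i, Real.sqrt (∑ t ∈ Ts, (π t i)^2) ≤ Real.sqrt (V i) + Real.sqrt T * πstar i := by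
    intro i
    have hd : ∑ t ∈ Ts, (π t i - πstar i) ≤ Real.sqrt (V i) * Real.sqrt T := by
      have h1 : (∑ t ∈ Ts, (π t i - πstar i))^2 ≤ V i * T := by
        have := Finset.sum_mul_sq_le_sq_mul_sq Ts (fun t => π t i - πstar i) (fun _ => (1:ℝ))
        simpa [hcard] using this
      calc ∑ t ∈ Ts, (π t i - πstar i) ≤ |∑ t ∈ Ts, (π t i - πstar i)| := le_abs_self _
        _ = Real.sqrt ((∑ t ∈ Ts, (π t i - πstar i))^2) := (Real.sqrt_sq_eq_abs _).symm
        _ ≤ Real.sqrt (V i * T) := Real.sqrt_le_sqrt h1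
        _ = Real.sqrt (V i) * Real.sqrt T := Real.sqrt_mul (hVnn i) _
    have expand : ∑ t ∈ Ts, (π t i)^2
        = V i + 2 * πstar i * (∑ t ∈ Ts, (π t i - πstar i)) + T * (πstar i)^2 := by
      have : ∑ t ∈ Ts, (π t i)^2
          = ∑ t ∈ Ts, ((π t i - πstar i)^2 + 2 * πstar i * (π t i - πstar i) + (πstar i)^2) :=
        Finset.sum_congr rfl (fun t _ => by ring)
      rw [this, Finset.sum_add_distrib, Finset.sum_add_distrib, ← Finset.mul_sum,
        Finset.sum_const, hcard]
      push_cast; ring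
    have hA : ∑ t ∈ Ts, (π t i)^2 ≤ (Real.sqrt (V i) + Real.sqrt T * πstar i)^2 := by
      have hs := Real.sq_sqrt (hVnn i)
      nlinarith [hπs i, mul_le_mul_of_nonneg_left hd (mul_nonneg (by norm_num : (0:ℝ) ≤ 2) (hπs i))]
    calc Real.sqrt (∑ t ∈ Ts, (π t i)^2) ≤ Real.sqrt ((Real.sqrt (V i) + Real.sqrt T * πstar i)^2) :=
          Real.sqrt_le_sqrt hA
      _ = Real.sqrt (V i) + Real.sqrt T * πstar i := Real.sqrt_sq
          (add_nonneg (Real.sqrt_nonneg _) (mul_nonneg (Real.sqrt_nonneg _) (hπs i)))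
  -- Step 2: sum over i and square
  have step2 : (∑ i, Real.sqrt (∑ t ∈ Ts, (π t i)^2))^2 ≤ (S' + Real.sqrt T * P)^2 := by
    have hsum : ∑ i, Real.sqrt (∑ t ∈ Ts, (π t i)^2) ≤ S' + Real.sqrt T * P := by
      rw [hS', hP, Finset.mul_sum, ← Finset.sum_add_distrib]
      exact Finset.sum_le_sum fun i _ => step1 i
    have hnn : 0 ≤ ∑ i, Real.sqrt (∑ t ∈ Ts, (π t i)^2) :=
      Finset.sum_nonneg fun i _ => Real.sqrt_nonneg _
    exact pow_le_pow_left₀ hnn hsum 2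
  -- Step 3: T * P^2 ≤ ∑_t (∑_i π)^2
  have step3 : (T:ℝ) * P^2 ≤ ∑ t ∈ Ts, (∑ i, π t i)^2 := by
    have hB : (T:ℝ) * P ≤ ∑ t ∈ Ts, ∑ i, π t i := by
      rw [hP]
      calc (T:ℝ) * (∑ i, πstar i) ≤ (T:ℝ) * ((1/(T:ℝ)) * ∑ t ∈ Ts, ∑ i, π t i) :=
            mul_le_mul_of_nonneg_left havg hTpos.le
        _ = ∑ t ∈ Ts, ∑ i, π t i := by field_simp
    have hsq : (∑ t ∈ Ts, ∑ i, π t i)^2 ≤ (T:ℝ) * ∑ t ∈ Ts, (∑ i, π t i)^2 := by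
      have := sq_sum_le_card_mul_sum_sq (s := Ts) (f := fun t => ∑ i, π t i)
      simpa [hcard] using this
    have hTPnn : 0 ≤ (T:ℝ) * P := mul_nonneg hTpos.le hPnn
    nlinarith
  -- rewrite the RHS sums in terms of S'
  have hsqrtdiv : ∀ i, Real.sqrt (V i / T) = Real.sqrt (V i) / Real.sqrt T :=
    fun i => Real.sqrt_div (hVnn i) _
  have hSsum : (∑ i, Real.sqrt ((∑ t ∈ Ts, (π t i - πstar i)^2) / T)) = S' / Real.sqrt T := by
    rw [hS', Finset.sum_div]
    exact Finset.sum_congr rfl fun i _ => hsqrtdiv i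
  rw [hSsum]
  have hRHS : ((T:ℝ)/K) * (S' / Real.sqrt T) * (2 * P + S' / Real.sqrt T)
      = (S'^2 + 2 * Real.sqrt T * P * S') / K := by
    field_simp
    linear_combination (-(2 * S' * P * Real.sqrt T) - S'^2) * hsqT
  rw [hRHS]
  have main : (∑ i, Real.sqrt (∑ t ∈ Ts, (π t i)^2))^2 - (∑ t ∈ Ts, (∑ i, π t i)^2)
      ≤ S'^2 + 2 * Real.sqrt T * P * S' := by nlinarith [step2, step3, hsqT]
  calc (∑ i, Real.sqrt (∑ t ∈ Ts, (π t i)^2))^2 / K - (1/K) * ∑ t ∈ Ts, (∑ i, π t i)^2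
      = ((∑ i, Real.sqrt (∑ t ∈ Ts, (π t i)^2))^2 - ∑ t ∈ Ts, (∑ i, π t i)^2) / K := by ring
    _ ≤ (S'^2 + 2 * Real.sqrt T * P * S') / K := (div_le_div_iff_of_pos_right hK).mpr main
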